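/- arXiv:1105.2781 — 5 statements merged into one kernel-verified Lean document; each statement's English description precedes it below -/
import Mathlib

section
/- Let ω_p^m = √(p² + m²). For real p, q and m > 0, define h_m(p,q) = (p·ω_q^m − q·ω_p^m)/m². Then as m → 0⁺: if p·q < 0 with p > 0 then h_m(p,q) → +∞; if p·q < 0 with p < 0 then h_m(p,q) → −∞; if p·q > 0 then h_m(p,q) → (p/|q| − q/|p|)/2; if p = q = 0 then h_m(p,q) = 0 for all m; if p ≠ 0 and q = 0 then h_m(p,q) → sign(p)·∞. -/
/-!
Write `ω_r = √(r² + m²)`. Since `ω_r → |r|` as `m → 0`, the numerator `p ω_q − q ω_p` tends to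
`p|q| − q|p|`, which equals `2p|q|` when `pq < 0`; divided by `m²` it blows up with the sign of `p`.
When `pq > 0` the numerator tends to `0`, and multiplying by the conjugate `p ω_q + q ω_p` gives
`h_m (p ω_q + q ω_p) = p² − q²`, so `h_m → (p² − q²) / (2p|q|) = (p/|q| − q/|p|) / 2`.
When `q = 0` simply `h_m = p / m`.
-/

open Filter Topology

noncomputable def rapidityArg (p q m : ℝ) : ℝ :=
  (p * √(q ^ 2 + m ^ 2) - q * √(p ^ 2 + m ^ 2)) / m ^ 2

lemma tendsto_sqrt_sq_add_sq_nhds_zero (r : ℝ) :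
    Tendsto (fun m : ℝ => √(r ^ 2 + m ^ 2)) (𝓝 0) (𝓝 |r|) := by
  have hcont : Continuous (fun m : ℝ => √(r ^ 2 + m ^ 2)) := by fun_prop
  simpa [Real.sqrt_sq_eq_abs] using hcont.tendsto 0

lemma tendsto_inv_sq_nhdsGT_zero : Tendsto (fun m : ℝ => (m ^ 2)⁻¹) (𝓝[>] 0) atTop := by
  simpa only [Function.comp_def, inv_pow] using
    (tendsto_pow_atTop two_ne_zero).comp (tendsto_inv_nhdsGT_zero (𝕜 := ℝ))

lemma Filter.Tendsto.div_sq_atTop_of_pos {f : ℝ → ℝ} {c : ℝ} (hc : 0 < c)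
    (hf : Tendsto f (𝓝[>] 0) (𝓝 c)) : Tendsto (fun m => f m / m ^ 2) (𝓝[>] 0) atTop := by
  simpa only [div_eq_mul_inv] using hf.pos_mul_atTop hc tendsto_inv_sq_nhdsGT_zero

lemma Filter.Tendsto.div_sq_atBot_of_neg {f : ℝ → ℝ} {c : ℝ} (hc : c < 0)
    (hf : Tendsto f (𝓝[>] 0) (𝓝 c)) : Tendsto (fun m => f m / m ^ 2) (𝓝[>] 0) atBot := by
  simpa only [div_eq_mul_inv] using hf.neg_mul_atTop hc tendsto_inv_sq_nhdsGT_zero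

lemma mul_abs_sub_mul_abs_of_mul_nonpos {p q : ℝ} (h : p * q ≤ 0) :
    p * |q| - q * |p| = 2 * p * |q| := by
  rcases le_total 0 p with hp | hp <;> rcases le_total 0 q with hq | hq <;>
    simp only [abs_of_nonneg, abs_of_nonpos, *] <;> nlinarith

lemma mul_abs_add_mul_abs_of_mul_nonneg {p q : ℝ} (h : 0 ≤ p * q) :
    p * |q| + q * |p| = 2 * p * |q| := by
  rcases le_total 0 p with hp | hp <;> rcases le_total 0 q with hq | hq <;>
    simp only [abs_of_nonneg, abs_of_nonpos, *] <;> nlinarith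

lemma tendsto_rapidityArg_numerator (p q : ℝ) :
    Tendsto (fun m : ℝ => p * √(q ^ 2 + m ^ 2) - q * √(p ^ 2 + m ^ 2)) (𝓝[>] 0)
      (𝓝 (p * |q| - q * |p|)) :=
  (((tendsto_sqrt_sq_add_sq_nhds_zero q).const_mul p).sub
    ((tendsto_sqrt_sq_add_sq_nhds_zero p).const_mul q)).mono_left nhdsWithin_le_nhds

lemma tendsto_rapidityArg_atTop {p q : ℝ} (hpq : p * q < 0) (hp : 0 < p) :
    Tendsto (rapidityArg p q) (𝓝[>] 0) atTop := by
  refine (tendsto_rapidityArg_numerator p q).div_sq_atTop_of_pos ?_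
  rw [mul_abs_sub_mul_abs_of_mul_nonpos hpq.le]
  have hq : q ≠ 0 := by rintro rfl; simp at hpq
  positivity

lemma tendsto_rapidityArg_atBot {p q : ℝ} (hpq : p * q < 0) (hp : p < 0) :
    Tendsto (rapidityArg p q) (𝓝[>] 0) atBot := by
  refine (tendsto_rapidityArg_numerator p q).div_sq_atBot_of_neg ?_
  rw [mul_abs_sub_mul_abs_of_mul_nonpos hpq.le]
  have hq : 0 < |q| := abs_pos.mpr (by rintro rfl; simp at hpq)
  nlinarith

lemma rapidityArg_mul_conj (p q : ℝ) {m : ℝ} (hm : m ≠ 0) :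
    rapidityArg p q m * (p * √(q ^ 2 + m ^ 2) + q * √(p ^ 2 + m ^ 2)) = p ^ 2 - q ^ 2 := by
  have hq : √(q ^ 2 + m ^ 2) ^ 2 = q ^ 2 + m ^ 2 := Real.sq_sqrt (by positivity)
  have hp : √(p ^ 2 + m ^ 2) ^ 2 = p ^ 2 + m ^ 2 := Real.sq_sqrt (by positivity)
  rw [rapidityArg, div_mul_eq_mul_div, div_eq_iff (pow_ne_zero 2 hm)]
  linear_combination p ^ 2 * hq - q ^ 2 * hp

lemma tendsto_rapidityArg_nhds {p q : ℝ} (hpq : 0 < p * q) :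
    Tendsto (rapidityArg p q) (𝓝[>] 0) (𝓝 ((p / |q| - q / |p|) / 2)) := by
  have hp : p ≠ 0 := by rintro rfl; simp at hpq
  have hq : q ≠ 0 := by rintro rfl; simp at hpq
  have hconj : Tendsto (fun m : ℝ => p * √(q ^ 2 + m ^ 2) + q * √(p ^ 2 + m ^ 2)) (𝓝[>] 0)
      (𝓝 (2 * p * |q|)) := by
    rw [← mul_abs_add_mul_abs_of_mul_nonneg hpq.le]
    exact (((tendsto_sqrt_sq_add_sq_nhds_zero q).const_mul p).add
      ((tendsto_sqrt_sq_add_sq_nhds_zero p).const_mul q)).mono_left nhdsWithin_le_nhds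
  have hlimit : (p ^ 2 - q ^ 2) / (2 * p * |q|) = (p / |q| - q / |p|) / 2 := by
    have hsign : |q| / p = q / |p| := by
      rw [div_eq_div_iff hp (abs_ne_zero.mpr hp), ← abs_mul, mul_comm q, abs_of_pos hpq]
    have hq2 : q ^ 2 = |q| ^ 2 := (sq_abs q).symm
    rw [← hsign, hq2]
    field_simp
  rw [← hlimit]
  refine (tendsto_const_nhds.div hconj (by positivity)).congr' ?_
  filter_upwards [self_mem_nhdsWithin, hconj.eventually_ne (by positivity)] with m hm hne
  rw [Pi.div_apply, eq_comm, eq_div_iff hne, rapidityArg_mul_conj p q (ne_of_gt hm)]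

lemma rapidityArg_zero_right (p : ℝ) {m : ℝ} (hm : 0 < m) : rapidityArg p 0 m = p * m⁻¹ := by
  rw [rapidityArg, zero_pow two_ne_zero, zero_add, Real.sqrt_sq hm.le, zero_mul, sub_zero]
  field_simp

/-- Limits of `h_m(p,q) = (p·ω_q^m − q·ω_p^m)/m²` as `m → 0⁺`,
where `ω_p^m = √(p² + m²)`. -/
theorem rapidity_argument_mass_zero_limit (p q : ℝ) :
    let ω : ℝ → ℝ → ℝ := fun m r => Real.sqrt (r ^ 2 + m ^ 2)
    let h : ℝ → ℝ := fun m => (p * ω m q - q * ω m p) / m ^ 2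
    (p * q < 0 → 0 < p → Tendsto h (nhdsWithin 0 (Set.Ioi 0)) atTop) ∧
    (p * q < 0 → p < 0 → Tendsto h (nhdsWithin 0 (Set.Ioi 0)) atBot) ∧
    (0 < p * q →
      Tendsto h (nhdsWithin 0 (Set.Ioi 0)) (nhds ((p / |q| - q / |p|) / 2))) ∧
    (p = 0 → q = 0 → ∀ m : ℝ, h m = 0) ∧
    (p ≠ 0 → q = 0 →
      (0 < p → Tendsto h (nhdsWithin 0 (Set.Ioi 0)) atTop) ∧
      (p < 0 → Tendsto h (nhdsWithin 0 (Set.Ioi 0)) atBot)) := by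
  intro ω h
  refine ⟨tendsto_rapidityArg_atTop, tendsto_rapidityArg_atBot, tendsto_rapidityArg_nhds,
    ?_, ?_⟩
  · rintro rfl rfl m
    simp [h]
  · rintro - rfl
    have hrecip : rapidityArg p 0 =ᶠ[𝓝[>] 0] fun m => p * m⁻¹ :=
      eventually_mem_nhdsWithin.mono fun m hm => rapidityArg_zero_right p hm
    exact ⟨fun hp => (tendsto_inv_nhdsGT_zero.const_mul_atTop hp).congr' hrecip.symm,
      fun hp => (tendsto_inv_nhdsGT_zero.const_mul_atTop_of_neg hp).congr' hrecip.symm⟩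
end

section
/- For p, q > 0 and m → 0⁺, sinh⁻¹((p·ω_q^m − q·ω_p^m)/m²) − (log p − log q) → 0; i.e. the rapidity difference of two positive-momentum particles converges to the difference of logarithms of their momenta as the mass tends to zero. -/
/-!
Multiplying numerator and denominator by the conjugate `p ω_q + q ω_p`, the argument of `arsinh`
becomes `(p² - q²) / (p ω_q + q ω_p)`, which is continuous at `m = 0` with value
`(p² - q²) / (2pq) = (p/q - q/p) / 2`; and `arsinh ((x - x⁻¹) / 2) = log x` because
`sinh (log x) = (x - x⁻¹) / 2`.
-/

open Filter Topology Real

theorem Real.arsinh_div_sub_div_div_two {p q : ℝ} (hp : 0 < p) (hq : 0 < q) :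
    arsinh ((p / q - q / p) / 2) = log p - log q := by
  rw [← log_div hp.ne' hq.ne', ← inv_div p q, ← sinh_log (div_pos hp hq), arsinh_sinh]

section Rapidity

variable {p q : ℝ} (hp : 0 < p) (hq : 0 < q)
include hp hq

theorem mul_sqrt_add_sq_add_mul_sqrt_add_sq_pos (m : ℝ) :
    0 < p * √(q ^ 2 + m ^ 2) + q * √(p ^ 2 + m ^ 2) := by
  have hωq : 0 < √(q ^ 2 + m ^ 2) := sqrt_pos.2 (by positivity)
  have hωp : 0 < √(p ^ 2 + m ^ 2) := sqrt_pos.2 (by positivity)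
  positivity

theorem mul_sqrt_add_sq_sub_mul_sqrt_add_sq_div_sq {m : ℝ} (hm : m ≠ 0) :
    (p * √(q ^ 2 + m ^ 2) - q * √(p ^ 2 + m ^ 2)) / m ^ 2
      = (p ^ 2 - q ^ 2) / (p * √(q ^ 2 + m ^ 2) + q * √(p ^ 2 + m ^ 2)) := by
  have hωq : √(q ^ 2 + m ^ 2) ^ 2 = q ^ 2 + m ^ 2 := sq_sqrt (by positivity)
  have hωp : √(p ^ 2 + m ^ 2) ^ 2 = p ^ 2 + m ^ 2 := sq_sqrt (by positivity)
  rw [div_eq_div_iff (pow_ne_zero 2 hm)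
    (mul_sqrt_add_sq_add_mul_sqrt_add_sq_pos hp hq m).ne']
  linear_combination p ^ 2 * hωq - q ^ 2 * hωp

theorem tendsto_sq_sub_sq_div_mul_sqrt_add_mul_sqrt :
    Tendsto (fun m : ℝ => (p ^ 2 - q ^ 2) / (p * √(q ^ 2 + m ^ 2) + q * √(p ^ 2 + m ^ 2)))
      (𝓝 0) (𝓝 ((p / q - q / p) / 2)) := by
  have hcont : ContinuousAt
      (fun m : ℝ => (p ^ 2 - q ^ 2) / (p * √(q ^ 2 + m ^ 2) + q * √(p ^ 2 + m ^ 2))) 0 :=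
    ContinuousAt.div (by fun_prop) (by fun_prop)
      (mul_sqrt_add_sq_add_mul_sqrt_add_sq_pos hp hq 0).ne'
  convert hcont.tendsto using 2
  simp only [ne_eq, OfNat.ofNat_ne_zero, not_false_eq_true, zero_pow, add_zero,
    sqrt_sq hp.le, sqrt_sq hq.le]
  field_simp
  ring

end Rapidity

/-- For `p, q > 0`, the rapidity difference
`arsinh((p·ω_q^m − q·ω_p^m)/m²)` converges to `log p − log q` as `m → 0⁺`. -/
theorem rapidity_difference_massless_limit (p q : ℝ) (hp : 0 < p) (hq : 0 < q) :
    Tendsto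
      (fun m : ℝ =>
        Real.arsinh ((p * Real.sqrt (q ^ 2 + m ^ 2) - q * Real.sqrt (p ^ 2 + m ^ 2)) / m ^ 2)
          - (Real.log p - Real.log q))
      (nhdsWithin 0 (Set.Ioi 0)) (nhds 0) := by
  have hargument : Tendsto
      (fun m : ℝ => (p * √(q ^ 2 + m ^ 2) - q * √(p ^ 2 + m ^ 2)) / m ^ 2)
      (𝓝[>] 0) (𝓝 ((p / q - q / p) / 2)) := by
    refine (tendsto_sq_sub_sq_div_mul_sqrt_add_mul_sqrt hp hq).mono_left
      nhdsWithin_le_nhds |>.congr' ?_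
    filter_upwards [self_mem_nhdsWithin] with m hm
    exact (mul_sqrt_add_sq_sub_mul_sqrt_add_sq_div_sq hp hq (ne_of_gt hm)).symm
  have hlimit := (continuous_arsinh.tendsto _ |>.comp hargument).sub_const (log p - log q)
  rwa [Real.arsinh_div_sub_div_div_two hp hq, sub_self] at hlimit
end

section
/- Let S : ℝ → ℂ be continuous with limits S(±∞) := lim_{θ→±∞} S(θ) existing and equal to a common value S(∞). Then for fixed m > 0 and p, q ∈ ℝ with p·q < 0, lim_{λ→0⁺} S(arsinh((p·ω_q^{λm} − q·ω_p^{λm})/(λm)²)) = S(∞). -/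
open Filter

lemma arsinh_tendsto_atTop : Tendsto Real.arsinh atTop atTop :=
  Real.arsinh_strictMono.monotone.tendsto_atTop_atTop
    (fun b => ⟨Real.sinh b, (Real.arsinh_sinh b).ge⟩)

lemma arsinh_tendsto_atBot : Tendsto Real.arsinh atBot atBot :=
  Real.arsinh_strictMono.monotone.tendsto_atBot_atBot
    (fun b => ⟨Real.sinh b, (Real.arsinh_sinh b).le⟩)

/-- For a continuous `S : ℝ → ℂ` with equal limits `L` at `±∞`,
for `m > 0` and momenta `p, q` with `p·q < 0`, the scaling limit of the
scattering function is `L`: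
`S(arsinh((p·ω_q^{λm} − q·ω_p^{λm})/(λm)²)) → L` as `λ → 0⁺`. -/
theorem scattering_function_scaling_limit_opposite_momenta
    (S : ℝ → ℂ) (hc : Continuous S) (L : ℂ)
    (htop : Tendsto S atTop (nhds L)) (hbot : Tendsto S atBot (nhds L))
    (m : ℝ) (hm : 0 < m) (p q : ℝ) (hpq : p * q < 0) :
    Tendsto
      (fun lam : ℝ =>
        S (Real.arsinh
          ((p * Real.sqrt (q ^ 2 + (lam * m) ^ 2)
            - q * Real.sqrt (p ^ 2 + (lam * m) ^ 2)) / (lam * m) ^ 2)))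
      (nhdsWithin 0 (Set.Ioi 0)) (nhds L) := by
  set num : ℝ → ℝ := fun lam =>
    p * Real.sqrt (q ^ 2 + (lam * m) ^ 2) - q * Real.sqrt (p ^ 2 + (lam * m) ^ 2)
  have hnumc : Continuous num := by
    fun_prop
  have hnum0 : num 0 = p * |q| - q * |p| := by
    show p * Real.sqrt (q ^ 2 + (0 * m) ^ 2) - q * Real.sqrt (p ^ 2 + (0 * m) ^ 2) = _
    rw [show q ^ 2 + (0 * m) ^ 2 = q ^ 2 by ring, show p ^ 2 + (0 * m) ^ 2 = p ^ 2 by ring,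
      Real.sqrt_sq_eq_abs, Real.sqrt_sq_eq_abs]
  -- the inverse of (λm)² tends to atTop
  have hinv : Tendsto (fun lam : ℝ => ((lam * m) ^ 2)⁻¹) (nhdsWithin 0 (Set.Ioi 0)) atTop := by
    apply tendsto_inv_nhdsGT_zero.comp
    apply tendsto_nhdsWithin_of_tendsto_nhds_of_eventually_within
    · have : Tendsto (fun lam : ℝ => (lam * m) ^ 2) (nhds 0) (nhds ((0 * m) ^ 2)) :=
        ((continuous_id.mul continuous_const).pow 2).tendsto 0
      simpa using this.mono_left nhdsWithin_le_nhds
    · filter_upwards [self_mem_nhdsWithin] with x hx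
      exact pow_pos (mul_pos hx hm) 2
  have hnumt : Tendsto num (nhdsWithin 0 (Set.Ioi 0)) (nhds (p * |q| - q * |p|)) := by
    rw [← hnum0]
    exact (hnumc.tendsto 0).mono_left nhdsWithin_le_nhds
  have key : ∀ lam : ℝ, num lam / (lam * m) ^ 2 = num lam * ((lam * m) ^ 2)⁻¹ := by
    intro lam; rw [div_eq_mul_inv]
  rcases lt_or_gt_of_ne (fun h : p = 0 => by simp [h] at hpq) with hp | hp
  · -- p < 0, so q > 0, numerator limit = 2pq < 0
    have hq : 0 < q := by nlinarith
    have hlim : p * |q| - q * |p| < 0 := by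
      rw [abs_of_pos hq, abs_of_neg hp]; nlinarith
    have harg : Tendsto (fun lam : ℝ => num lam / (lam * m) ^ 2)
        (nhdsWithin 0 (Set.Ioi 0)) atBot := by
      simp only [key]
      exact Tendsto.neg_mul_atTop hlim hnumt hinv
    exact hbot.comp (arsinh_tendsto_atBot.comp harg)
  · have hq : q < 0 := by nlinarith
    have hlim : (0:ℝ) < p * |q| - q * |p| := by
      rw [abs_of_neg hq, abs_of_pos hp]; nlinarith
    have harg : Tendsto (fun lam : ℝ => num lam / (lam * m) ^ 2)
        (nhdsWithin 0 (Set.Ioi 0)) atTop := by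
      simp only [key]
      exact Tendsto.pos_mul_atTop hlim hnumt hinv
    exact htop.comp (arsinh_tendsto_atTop.comp harg)
end

section
/- If f ∈ 𝒮(ℝ) has support in (0,∞), then f̂⁺(β) := i e^β f̃(e^β) extends to a bounded analytic function on the strip {0 < Im β < π}, with bound |f̂⁺(β+iλ)| ≤ (2π)^{−1/2}‖f'‖_{L¹} for 0 ≤ λ ≤ π, and boundary value f̂⁺(β+iπ) = f̂⁻(β) := −i e^β f̃(−e^β) for real β. -/
open MeasureTheory

/-- Fourier transform with the paper's convention `f̃(p) = (2π)^{-1/2} ∫ f(ξ) e^{ipξ} dξ`. -/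
noncomputable def ftilde (f : ℝ → ℂ) (p : ℝ) : ℂ :=
  (Real.sqrt (2 * Real.pi) : ℂ)⁻¹ * ∫ x : ℝ, f x * Complex.exp (Complex.I * p * x)

/-- `f̂⁺(β) := i e^β f̃(e^β)`. -/
noncomputable def hatPlus (f : ℝ → ℂ) (β : ℝ) : ℂ :=
  Complex.I * Real.exp β * ftilde f (Real.exp β)

/-- `f̂⁻(β) := −i e^β f̃(−e^β)`. -/
noncomputable def hatMinus (f : ℝ → ℂ) (β : ℝ) : ℂ :=
  -(Complex.I * Real.exp β * ftilde f (-Real.exp β))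

/-- The analytic continuation `f̂⁺(ζ) = i e^ζ f̃(e^ζ)` to complex `ζ`,
using the analytically continued Fourier transform. -/
noncomputable def hatPlusC (f : ℝ → ℂ) (ζ : ℂ) : ℂ :=
  Complex.I * Complex.exp ζ * ((Real.sqrt (2 * Real.pi) : ℂ)⁻¹ *
    ∫ x : ℝ, f x * Complex.exp (Complex.I * Complex.exp ζ * x))

/-! For `Im p ≥ 0` and `x ≥ 0` we have `|e^{ipx}| ≤ 1`, so `F(p) = ∫ f(x) e^{ipx} dx` is dominated
by `‖f‖₁` on the closed upper half-plane: it is continuous there, and holomorphic on the open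
half-plane since `x f(x)` is integrable too. The exponential maps the closed strip
`0 ≤ Im ζ ≤ π` into the closed upper half-plane and the line `Im ζ = π` onto the negative axis,
which gives analyticity and the boundary values. Integrating by parts, `i p F(p)` is minus the
transform of `f'`, whence `|e^ζ F(e^ζ)| ≤ ‖f'‖₁`. -/

open Complex Set Filter Function Topology

/-- `ftilde f p = (2π)^{-1/2} fourierLaplace f p` for real `p`; `hatPlusC f ζ` evaluates it at
`p = e^ζ`. -/
noncomputable def fourierLaplace (f : ℝ → ℂ) (p : ℂ) : ℂ :=
  ∫ x : ℝ, f x * cexp (I * p * x)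

lemma norm_cexp_I_mul_mul_ofReal_le_one {p : ℂ} (hp : 0 ≤ p.im) {x : ℝ} (hx : 0 ≤ x) :
    ‖cexp (I * p * x)‖ ≤ 1 := by
  have hre : (I * p * (x : ℂ)).re = -(p.im * x) := by simp
  rw [norm_exp, hre, Real.exp_le_one_iff, neg_nonpos]
  exact mul_nonneg hp hx

lemma cexp_im_nonneg {ζ : ℂ} (h₀ : 0 ≤ ζ.im) (hπ : ζ.im ≤ Real.pi) : 0 ≤ (cexp ζ).im := by
  rw [exp_im]
  exact mul_nonneg (Real.exp_pos _).le (Real.sin_nonneg_of_nonneg_of_le_pi h₀ hπ)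

lemma cexp_im_pos {ζ : ℂ} (h₀ : 0 < ζ.im) (hπ : ζ.im < Real.pi) : 0 < (cexp ζ).im := by
  rw [exp_im]
  exact mul_pos (Real.exp_pos _) (Real.sin_pos_of_pos_of_lt_pi h₀ hπ)

section FourierLaplace

variable {f : ℝ → ℂ} {p : ℂ}

lemma norm_mul_cexp_le (hf : support f ⊆ Ici 0) (hp : 0 ≤ p.im) (x : ℝ) :
    ‖f x * cexp (I * p * x)‖ ≤ ‖f x‖ := by
  by_cases hx : f x = 0
  · simp [hx]
  · rw [norm_mul]
    exact mul_le_of_le_one_right (norm_nonneg _) (norm_cexp_I_mul_mul_ofReal_le_one hp (hf hx))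

lemma MeasureTheory.AEStronglyMeasurable.mul_cexp {μ : Measure ℝ} (hf : AEStronglyMeasurable f μ)
    (p : ℂ) : AEStronglyMeasurable (fun x : ℝ => f x * cexp (I * p * x)) μ :=
  hf.mul (by fun_prop : Continuous fun x : ℝ => cexp (I * p * x)).aestronglyMeasurable

lemma MeasureTheory.Integrable.mul_cexp {μ : Measure ℝ} (hf : Integrable f μ)
    (hsupp : support f ⊆ Ici 0) (hp : 0 ≤ p.im) :
    Integrable (fun x : ℝ => f x * cexp (I * p * x)) μ :=
  hf.norm.mono' (hf.aestronglyMeasurable.mul_cexp p) (.of_forall (norm_mul_cexp_le hsupp hp))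

lemma support_deriv_subset_Ici (hf : support f ⊆ Ici 0) : support (deriv f) ⊆ Ici 0 :=
  (support_deriv_subset).trans (closure_minimal hf isClosed_Ici)

lemma norm_fourierLaplace_le (hf : Integrable f) (hsupp : support f ⊆ Ici 0) (hp : 0 ≤ p.im) :
    ‖fourierLaplace f p‖ ≤ ∫ x, ‖f x‖ :=
  (norm_integral_le_integral_norm _).trans
    (integral_mono (hf.mul_cexp hsupp hp).norm hf.norm (norm_mul_cexp_le hsupp hp))

lemma continuousOn_fourierLaplace (hf : Integrable f) (hsupp : support f ⊆ Ici 0) :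
    ContinuousOn (fourierLaplace f) {p | 0 ≤ p.im} :=
  continuousOn_of_dominated (fun _ _ => hf.aestronglyMeasurable.mul_cexp _)
    (fun _ hp => .of_forall (norm_mul_cexp_le hsupp hp)) hf.norm
    (.of_forall fun _ => by fun_prop)

lemma hasDerivAt_fourierLaplace (hf : Integrable f) (hxf : Integrable (fun x : ℝ => x • f x))
    (hsupp : support f ⊆ Ici 0) (hp : 0 < p.im) :
    HasDerivAt (fourierLaplace f) (∫ x : ℝ, f x * cexp (I * p * x) * (I * x)) p := by
  have hU : {q : ℂ | 0 < q.im} ∈ 𝓝 p := (isOpen_lt continuous_const continuous_im).mem_nhds hp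
  refine (hasDerivAt_integral_of_dominated_loc_of_deriv_le hU
    (F' := fun q x => f x * cexp (I * q * x) * (I * x))
    (.of_forall fun q => hf.aestronglyMeasurable.mul_cexp q) (hf.mul_cexp hsupp hp.le)
    ((hf.aestronglyMeasurable.mul_cexp p).mul
      (by fun_prop : Continuous fun x : ℝ => I * (x : ℂ)).aestronglyMeasurable)
    (.of_forall fun x q hq => ?_) hxf.norm (.of_forall fun x q _ => ?_)).2
  · calc ‖f x * cexp (I * q * x) * (I * x)‖ = ‖f x * cexp (I * q * x)‖ * |x| := by simp
      _ ≤ ‖f x‖ * |x| := by gcongr; exact norm_mul_cexp_le hsupp (le_of_lt hq) x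
      _ = ‖x • f x‖ := by rw [norm_smul, Real.norm_eq_abs, mul_comm]
  · have hlin : HasDerivAt (fun q : ℂ => I * q * x) (I * x) q := by
      simpa using ((hasDerivAt_id q).const_mul I).mul_const (x : ℂ)
    simpa only [mul_assoc] using hlin.cexp.const_mul (f x)

lemma differentiableOn_fourierLaplace (hf : Integrable f)
    (hxf : Integrable (fun x : ℝ => x • f x)) (hsupp : support f ⊆ Ici 0) :
    DifferentiableOn ℂ (fourierLaplace f) {p | 0 < p.im} := fun _ hp =>
  (hasDerivAt_fourierLaplace hf hxf hsupp hp).differentiableAt.differentiableWithinAt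

lemma mul_fourierLaplace_eq_neg_fourierLaplace_deriv (hd : Differentiable ℝ f) (hf : Integrable f)
    (hf' : Integrable (deriv f)) (hsupp : support f ⊆ Ici 0) (hp : 0 ≤ p.im) :
    I * p * fourierLaplace f p = -fourierLaplace (deriv f) p := by
  have hv : ∀ x : ℝ, HasDerivAt (fun y : ℝ => cexp (I * p * y)) (cexp (I * p * x) * (I * p)) x :=
    fun x => by simpa using ((hasDerivAt_id (x : ℂ)).const_mul (I * p)).cexp.comp_ofReal
  have ibp := integral_mul_deriv_eq_deriv_mul_of_integrable (fun x _ => (hd x).hasDerivAt)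
    (fun x _ => hv x) ?_ (hf'.mul_cexp (support_deriv_subset_Ici hsupp) hp)
    (hf.mul_cexp hsupp hp)
  · rw [fourierLaplace, fourierLaplace, ← ibp, ← integral_const_mul]
    congr 1 with x
    ring
  · refine ((hf.mul_cexp hsupp hp).mul_const (I * p)).congr (.of_forall fun x => ?_)
    simp only [Pi.mul_apply]
    ring

lemma norm_mul_fourierLaplace_le (hd : Differentiable ℝ f) (hf : Integrable f)
    (hf' : Integrable (deriv f)) (hsupp : support f ⊆ Ici 0) (hp : 0 ≤ p.im) :
    ‖p * fourierLaplace f p‖ ≤ ∫ x, ‖deriv f x‖ := by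
  calc ‖p * fourierLaplace f p‖ = ‖I * p * fourierLaplace f p‖ := by simp
    _ = ‖fourierLaplace (deriv f) p‖ := by
        rw [mul_fourierLaplace_eq_neg_fourierLaplace_deriv hd hf hf' hsupp hp, norm_neg]
    _ ≤ ∫ x, ‖deriv f x‖ := norm_fourierLaplace_le hf' (support_deriv_subset_Ici hsupp) hp

end FourierLaplace

lemma SchwartzMap.integrable_smul_self (f : SchwartzMap ℝ ℂ) :
    Integrable (fun x : ℝ => x • f x) :=
  (f.integrable_pow_mul volume 1).mono' (by fun_prop) (.of_forall fun x => by simp)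

lemma SchwartzMap.integrable_deriv (f : SchwartzMap ℝ ℂ) : Integrable (deriv f) := by
  rw [show deriv f = SchwartzMap.derivCLM ℝ ℂ f from
    funext fun x => (SchwartzMap.derivCLM_apply ℝ f x).symm]
  exact (SchwartzMap.derivCLM ℝ ℂ f).integrable

lemma hatPlusC_eq (f : ℝ → ℂ) :
    hatPlusC f = fun ζ => I * cexp ζ * ((Real.sqrt (2 * Real.pi) : ℂ)⁻¹ *
      fourierLaplace f (cexp ζ)) := rfl

lemma hatPlusC_ofReal (f : ℝ → ℂ) (β : ℝ) : hatPlusC f β = hatPlus f β := by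
  simp [hatPlusC, hatPlus, ftilde, ofReal_exp]

lemma hatPlusC_add_pi_mul_I (f : ℝ → ℂ) (β : ℝ) :
    hatPlusC f (β + Real.pi * I) = hatMinus f β := by
  have hexp : cexp (β + Real.pi * I) = -(Real.exp β : ℂ) := by
    rw [exp_add, exp_pi_mul_I, ofReal_exp]; ring
  simp only [hatPlusC, hatMinus, ftilde, hexp]
  push_cast
  ring

lemma norm_hatPlusC_le {f : ℝ → ℂ} (hd : Differentiable ℝ f) (hf : Integrable f)
    (hf' : Integrable (deriv f)) (hsupp : support f ⊆ Ici 0) {ζ : ℂ} (h₀ : 0 ≤ ζ.im)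
    (hπ : ζ.im ≤ Real.pi) :
    ‖hatPlusC f ζ‖ ≤ (Real.sqrt (2 * Real.pi))⁻¹ * ∫ x, ‖deriv f x‖ := by
  calc ‖hatPlusC f ζ‖ = (Real.sqrt (2 * Real.pi))⁻¹ * ‖cexp ζ * fourierLaplace f (cexp ζ)‖ := by
        simp only [hatPlusC_eq, norm_mul, norm_I, one_mul, norm_inv, norm_real,
          Real.norm_of_nonneg (Real.sqrt_nonneg _)]
        ring
    _ ≤ _ := by
        gcongr
        exact norm_mul_fourierLaplace_le hd hf hf' hsupp (cexp_im_nonneg h₀ hπ)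

/-- For Schwartz `f` supported in `(0,∞)`, `f̂⁺` extends to a bounded
analytic function on the strip `{0 < Im β < π}`, with bound
`|f̂⁺(β+iλ)| ≤ (2π)^{−1/2}‖f'‖₁` and boundary value `f̂⁺(β+iπ) = f̂⁻(β)`. -/
theorem hatPlus_analytic_continuation
    (f : SchwartzMap ℝ ℂ) (hsupp : Function.support (f : ℝ → ℂ) ⊆ Set.Ioi 0) :
    ContinuousOn (hatPlusC (fun x => f x)) {ζ : ℂ | 0 ≤ ζ.im ∧ ζ.im ≤ Real.pi} ∧
    DifferentiableOn ℂ (hatPlusC (fun x => f x)) {ζ : ℂ | 0 < ζ.im ∧ ζ.im < Real.pi} ∧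
    (∀ β : ℝ, hatPlusC (fun x => f x) (β : ℂ) = hatPlus (fun x => f x) β) ∧
    (∀ β lam : ℝ, 0 ≤ lam → lam ≤ Real.pi →
      ‖hatPlusC (fun x => f x) (β + lam * Complex.I)‖
        ≤ (Real.sqrt (2 * Real.pi))⁻¹ * ∫ x : ℝ, ‖deriv (fun y => f y) x‖) ∧
    (∀ β : ℝ, hatPlusC (fun x => f x) (β + Real.pi * Complex.I)
        = hatMinus (fun x => f x) β) := by
  have hsupp₀ : support f ⊆ Ici 0 := hsupp.trans Ioi_subset_Ici_self
  refine ⟨?_, ?_, hatPlusC_ofReal f, fun β lam h₀ hπ => ?_, hatPlusC_add_pi_mul_I f⟩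
  · rw [hatPlusC_eq]
    refine ContinuousOn.mul (by fun_prop) (continuousOn_const.mul ?_)
    exact (continuousOn_fourierLaplace f.integrable hsupp₀).comp continuous_exp.continuousOn
      fun ζ hζ => cexp_im_nonneg hζ.1 hζ.2
  · rw [hatPlusC_eq]
    refine DifferentiableOn.mul (by fun_prop) (DifferentiableOn.const_mul ?_ _)
    exact (differentiableOn_fourierLaplace f.integrable f.integrable_smul_self hsupp₀).comp
      differentiable_exp.differentiableOn fun ζ hζ => cexp_im_pos hζ.1 hζ.2
  · exact norm_hatPlusC_le f.differentiable f.integrable f.integrable_deriv hsupp₀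
      (by simpa) (by simpa)
end

section
/- For φ ∈ C_c^∞(ℝ) define φ̌^±(ξ) := ∓(i/√(2π)) ∫ φ(β) e^{∓iξe^β} dβ. Then φ̌^± belongs to the Schwartz space, and with the transforms ĝ^±(β) := ±i e^β g̃(±e^β), one has (φ̌^±)^̂± = φ and (φ̌^±)^̂∓ = 0. -/
open MeasureTheory Real FourierTransform Complex

/-- `φ̌⁺(ξ) := −(i/√(2π)) ∫ φ(β) e^{−iξe^β} dβ`. -/
noncomputable def checkPlus (φ : ℝ → ℂ) (ξ : ℝ) : ℂ :=
  -(Complex.I * (Real.sqrt (2 * Real.pi) : ℂ)⁻¹ *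
    ∫ β : ℝ, φ β * Complex.exp (-(Complex.I * ξ * Real.exp β)))

/-- `φ̌⁻(ξ) := (i/√(2π)) ∫ φ(β) e^{iξe^β} dβ`. -/
noncomputable def checkMinus (φ : ℝ → ℂ) (ξ : ℝ) : ℂ :=
  Complex.I * (Real.sqrt (2 * Real.pi) : ℂ)⁻¹ *
    ∫ β : ℝ, φ β * Complex.exp (Complex.I * ξ * Real.exp β)


noncomputable def ccToSchwartz (f : ℝ → ℂ) (hf : ContDiff ℝ (⊤ : ℕ∞) f)
    (hcf : HasCompactSupport f) : SchwartzMap ℝ ℂ where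
  toFun := f
  smooth' := hf.of_le (by simp)
  decay' := by
    intro k n
    have hsupp : HasCompactSupport fun x : ℝ => ‖x‖ ^ k * ‖iteratedFDeriv ℝ n f x‖ :=
      HasCompactSupport.mul_left ((hcf.iteratedFDeriv n).norm)
    have hcont : Continuous fun x : ℝ => ‖x‖ ^ k * ‖iteratedFDeriv ℝ n f x‖ :=
      (continuous_norm.pow k).mul (hf.continuous_iteratedFDeriv (by exact_mod_cast le_top)).norm
    obtain ⟨C, hC⟩ := hsupp.exists_bound_of_continuous hcont
    refine ⟨C, fun x => ?_⟩
    have := hC x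
    rwa [Real.norm_eq_abs, _root_.abs_of_nonneg (by positivity)] at this

noncomputable def psi (φ : ℝ → ℂ) (p : ℝ) : ℂ :=
  if 0 < p then φ (Real.log p) / (p : ℂ) else 0

variable {φ : ℝ → ℂ}

lemma psi_nonpos {p : ℝ} (hp : p ≤ 0) : psi φ p = 0 := by
  simp [psi, not_lt.mpr hp]

lemma psi_exp (β : ℝ) : psi φ (Real.exp β) = φ β / (Real.exp β : ℂ) := by
  simp [psi, Real.exp_pos β, Real.log_exp]

lemma tsupport_bound (hc : HasCompactSupport φ) : ∃ R : ℝ, ∀ x ∈ tsupport φ, |x| ≤ R := by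
  obtain ⟨R, hR⟩ := hc.isBounded.subset_closedBall 0
  exact ⟨R, fun x hx => by simpa [Real.dist_eq] using hR hx⟩

lemma psi_smooth (hφ : ContDiff ℝ (⊤ : ℕ∞) φ) (hc : HasCompactSupport φ) : ContDiff ℝ (⊤ : ℕ∞) (psi φ) := by
  obtain ⟨R, hR⟩ := tsupport_bound hc
  rw [contDiff_iff_contDiffAt]
  intro x
  rcases lt_or_ge x (Real.exp (-(|R|+1))) with hx | hx
  · have hev : psi φ =ᶠ[nhds x] (fun _ => 0) := by
      filter_upwards [eventually_lt_nhds hx] with y hy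
      rcases le_or_gt y 0 with h | h
      · exact psi_nonpos h
      · have hlog : Real.log y < -(|R|+1) := by
          have := Real.log_lt_log h hy
          simpa [Real.log_exp] using this
        have hz : φ (Real.log y) = 0 := by
          apply image_eq_zero_of_notMem_tsupport
          intro hmem
          have h2 := abs_le.mp (hR _ hmem)
          have := le_abs_self R
          linarith [h2.1]
        simp [psi, hz]
    exact (contDiffAt_const (c := (0:ℂ))).congr_of_eventuallyEq hev
  · have hx0 : 0 < x := lt_of_lt_of_le (Real.exp_pos _) hx
    have hev : psi φ =ᶠ[nhds x] (fun p => φ (Real.log p) * ((p:ℂ))⁻¹) := by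
      filter_upwards [eventually_gt_nhds hx0] with y hy
      simp [psi, hy, div_eq_mul_inv]
    refine ContDiffAt.congr_of_eventuallyEq ?_ hev
    have h1 : ContDiffAt ℝ (⊤ : ℕ∞) (fun p : ℝ => φ (Real.log p)) x :=
      (hφ.contDiffAt).comp x (Real.contDiffAt_log.mpr hx0.ne')
    have h2 : ContDiffAt ℝ (⊤ : ℕ∞) (fun p : ℝ => (p : ℂ)) x := Complex.ofRealCLM.contDiff.contDiffAt
    exact h1.mul (h2.inv (Complex.ofReal_ne_zero.mpr hx0.ne'))

lemma psi_compactSupport (hc : HasCompactSupport φ) : HasCompactSupport (psi φ) := by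
  obtain ⟨R, hR⟩ := tsupport_bound hc
  apply HasCompactSupport.intro (isCompact_Icc (a := (0:ℝ)) (b := Real.exp |R|))
  intro p hp
  rcases le_or_gt p 0 with h | h
  · exact psi_nonpos h
  · have hgt : Real.exp |R| < p := by
      by_contra hcon
      exact hp ⟨h.le, not_lt.mp hcon⟩
    have hlog : |R| < Real.log p := (Real.lt_log_iff_exp_lt h).mpr hgt
    have hz : φ (Real.log p) = 0 := by
      apply image_eq_zero_of_notMem_tsupport
      intro hmem
      have h2 := abs_le.mp (hR _ hmem)
      have := le_abs_self (Real.log p)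
      linarith [h2.2, le_abs_self R]
    simp [psi, hz]

lemma cov (g : ℝ → ℂ) :
    (∫ p : ℝ, psi φ p * g p) = ∫ β : ℝ, φ β * g (Real.exp β) := by
  have h1 : (∫ p in Set.Ioi (0:ℝ), psi φ p * g p) = ∫ p : ℝ, psi φ p * g p := by
    apply setIntegral_eq_integral_of_forall_compl_eq_zero
    intro p hp
    have : p ≤ 0 := by simpa using hp
    simp [psi_nonpos this]
  have h2 := MeasureTheory.integral_image_eq_integral_abs_deriv_smul (s := Set.univ)
    MeasurableSet.univ (f := Real.exp) (f' := Real.exp)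
    (fun x _ => (Real.hasDerivAt_exp x).hasDerivWithinAt)
    (Real.exp_injective.injOn) (fun p => psi φ p * g p)
  rw [Set.image_univ, Real.range_exp] at h2
  rw [← h1, h2, MeasureTheory.Measure.restrict_univ]
  congr 1
  ext β
  rw [abs_of_pos (Real.exp_pos β), psi_exp, Complex.real_smul]
  have hne : (Real.exp β : ℂ) ≠ 0 := by exact_mod_cast (Real.exp_pos β).ne'
  field_simp

lemma int_to_fourier (χ : ℝ → ℂ) (ξ : ℝ) :
    (∫ p : ℝ, χ p * Complex.exp (-(Complex.I * ξ * p)))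
      = ((2 * Real.pi : ℝ) : ℂ) * 𝓕 (fun q => χ (2 * Real.pi * q)) ξ := by
  have h2π : (0:ℝ) < 2 * Real.pi := by positivity
  have h := MeasureTheory.Measure.integral_comp_mul_left
    (fun p : ℝ => χ p * Complex.exp (-(Complex.I * ξ * p))) (2 * Real.pi)
  rw [abs_inv, abs_of_pos h2π] at h
  have hF : 𝓕 (fun q => χ (2 * Real.pi * q)) ξ
      = ∫ x : ℝ, (fun p : ℝ => χ p * Complex.exp (-(Complex.I * ξ * p))) (2 * Real.pi * x) := by
    rw [Real.fourier_real_eq_integral_exp_smul]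
    congr 1
    ext v
    simp only [smul_eq_mul]
    rw [mul_comm]
    congr 2
    push_cast
    ring
  rw [hF, h, Complex.real_smul]
  have hne : ((2 * Real.pi : ℝ) : ℂ) ≠ 0 := Complex.ofReal_ne_zero.mpr h2π.ne'
  push_cast at hne ⊢
  field_simp

lemma int_to_fourier_neg (χ : ℝ → ℂ) (ξ : ℝ) :
    (∫ p : ℝ, χ p * Complex.exp (Complex.I * ξ * p))
      = ((2 * Real.pi : ℝ) : ℂ) * 𝓕 (fun q => χ (-(2 * Real.pi) * q)) ξ := by
  have h2π : (0:ℝ) < 2 * Real.pi := by positivity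
  have h := MeasureTheory.Measure.integral_comp_mul_left
    (fun p : ℝ => χ p * Complex.exp (Complex.I * ξ * p)) (-(2 * Real.pi))
  rw [abs_inv, abs_neg, abs_of_pos h2π] at h
  have hF : 𝓕 (fun q => χ (-(2 * Real.pi) * q)) ξ
      = ∫ x : ℝ, (fun p : ℝ => χ p * Complex.exp (Complex.I * ξ * p)) (-(2 * Real.pi) * x) := by
    rw [Real.fourier_real_eq_integral_exp_smul]
    congr 1
    ext v
    simp only [smul_eq_mul]
    rw [mul_comm]
    congr 2
    push_cast
    ring
  rw [hF, h, Complex.real_smul]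
  have hne : ((2 * Real.pi : ℝ) : ℂ) ≠ 0 := Complex.ofReal_ne_zero.mpr h2π.ne'
  push_cast at hne ⊢
  field_simp

lemma inv_int (χ : ℝ → ℂ) (hχ : ContDiff ℝ (⊤ : ℕ∞) χ) (hcχ : HasCompactSupport χ) (p : ℝ) :
    (∫ x : ℝ, 𝓕 χ x * Complex.exp (Complex.I * p * x)) = χ (p / (2 * Real.pi)) := by
  have hcoe : ⇑(ccToSchwartz χ hχ hcχ) = χ := rfl
  have hint : Integrable χ := by
    rw [← hcoe]; exact (ccToSchwartz χ hχ hcχ).integrable (μ := volume)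
  have h𝓕 : Integrable (𝓕 χ) := by
    have := (SchwartzMap.fourierTransformCLM ℂ (ccToSchwartz χ hχ hcχ)).integrable (μ := volume)
    rw [SchwartzMap.fourierTransformCLM_apply, SchwartzMap.fourier_coe, hcoe] at this
    exact this
  have hinv := (hχ.continuous).fourierInv_fourier_eq hint h𝓕
  have hπ : ((Real.pi : ℝ) : ℂ) ≠ 0 := Complex.ofReal_ne_zero.mpr Real.pi_ne_zero
  have hfun : (fun x : ℝ => 𝓕 χ x * Complex.exp (Complex.I * p * x))
      = fun v : ℝ => Complex.exp (↑(-2 * Real.pi * v * -(p / (2 * Real.pi))) * Complex.I) • 𝓕 χ v := by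
    ext v
    rw [smul_eq_mul, mul_comm]
    congr 2
    push_cast
    field_simp
  calc (∫ x : ℝ, 𝓕 χ x * Complex.exp (Complex.I * p * x))
      = 𝓕 (𝓕 χ) (-(p / (2 * Real.pi))) := by
        rw [Real.fourier_real_eq_integral_exp_smul, hfun]
    _ = 𝓕⁻ (𝓕 χ) (p / (2 * Real.pi)) :=
        (Real.fourierInv_eq_fourier_neg _ _).symm
    _ = χ (p / (2 * Real.pi)) := by rw [hinv]

lemma comp_mul_smooth {f : ℝ → ℂ} (hf : ContDiff ℝ (⊤ : ℕ∞) f) (a : ℝ) :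
    ContDiff ℝ (⊤ : ℕ∞) fun q : ℝ => f (a * q) :=
  hf.comp (contDiff_const.mul contDiff_id)

lemma comp_mul_supp {f : ℝ → ℂ} (hf : HasCompactSupport f) {a : ℝ} (ha : a ≠ 0) :
    HasCompactSupport fun q : ℝ => f (a * q) :=
  hf.comp_isClosedEmbedding (Homeomorph.mulLeft₀ a ha).isClosedEmbedding


section Main

variable {φ : ℝ → ℂ} (hφ : ContDiff ℝ (⊤ : ℕ∞) φ) (hc : HasCompactSupport φ)

lemma checkPlus_formula (ξ : ℝ) :
    checkPlus φ ξ = -(Complex.I * ((Real.sqrt (2 * Real.pi) : ℝ) : ℂ)⁻¹ * ((2 * Real.pi : ℝ) : ℂ))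
      * 𝓕 (fun q => psi φ (2 * Real.pi * q)) ξ := by
  unfold checkPlus
  rw [← cov (φ := φ) (fun p => Complex.exp (-(Complex.I * ξ * p))), int_to_fourier]
  ring

lemma checkMinus_formula (ξ : ℝ) :
    checkMinus φ ξ = (Complex.I * ((Real.sqrt (2 * Real.pi) : ℝ) : ℂ)⁻¹ * ((2 * Real.pi : ℝ) : ℂ))
      * 𝓕 (fun q => psi φ (-(2 * Real.pi) * q)) ξ := by
  unfold checkMinus
  rw [← cov (φ := φ) (fun p => Complex.exp (Complex.I * ξ * p)), int_to_fourier_neg]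
  ring

lemma two_pi_sqrt_ne : ((Real.sqrt (2 * Real.pi) : ℝ) : ℂ) ≠ 0 :=
  Complex.ofReal_ne_zero.mpr (ne_of_gt (Real.sqrt_pos.mpr (by positivity)))

lemma two_pi_sqrt_sq : ((Real.sqrt (2 * Real.pi) : ℝ) : ℂ) * ((Real.sqrt (2 * Real.pi) : ℝ) : ℂ)
    = ((2 * Real.pi : ℝ) : ℂ) := by
  rw [← Complex.ofReal_mul, Real.mul_self_sqrt (by positivity)]

include hφ hc in
lemma ftilde_checkPlus (p : ℝ) : ftilde (checkPlus φ) p = -Complex.I * psi φ p := by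
  have h2π : (0:ℝ) < 2 * Real.pi := by positivity
  unfold ftilde
  have hfun : (fun x : ℝ => checkPlus φ x * Complex.exp (Complex.I * p * x))
      = fun x : ℝ => (-(Complex.I * ((Real.sqrt (2 * Real.pi) : ℝ) : ℂ)⁻¹ * ((2 * Real.pi : ℝ) : ℂ)))
          * (𝓕 (fun q => psi φ (2 * Real.pi * q)) x * Complex.exp (Complex.I * p * x)) := by
    ext x
    rw [checkPlus_formula]
    ring
  rw [hfun, MeasureTheory.integral_const_mul,
    inv_int _ (comp_mul_smooth (psi_smooth hφ hc) _) (comp_mul_supp (psi_compactSupport hc) h2π.ne'),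
    show 2 * Real.pi * (p / (2 * Real.pi)) = p by rw [mul_comm, div_mul_cancel₀ _ h2π.ne'],
    ← two_pi_sqrt_sq]
  have h1 : ((Real.sqrt (2*Real.pi):ℝ):ℂ)⁻¹ * ((Real.sqrt (2*Real.pi):ℝ):ℂ) = 1 :=
    inv_mul_cancel₀ two_pi_sqrt_ne
  calc ((Real.sqrt (2*Real.pi):ℝ):ℂ)⁻¹ * (-(Complex.I * ((Real.sqrt (2*Real.pi):ℝ):ℂ)⁻¹ *
        (((Real.sqrt (2*Real.pi):ℝ):ℂ) * ((Real.sqrt (2*Real.pi):ℝ):ℂ))) * psi φ p)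
      = -Complex.I * psi φ p * ((((Real.sqrt (2*Real.pi):ℝ):ℂ)⁻¹ * ((Real.sqrt (2*Real.pi):ℝ):ℂ)) *
          (((Real.sqrt (2*Real.pi):ℝ):ℂ)⁻¹ * ((Real.sqrt (2*Real.pi):ℝ):ℂ))) := by ring
    _ = -Complex.I * psi φ p := by rw [h1]; ring

include hφ hc in
lemma ftilde_checkMinus (p : ℝ) : ftilde (checkMinus φ) p = Complex.I * psi φ (-p) := by
  have h2π : (0:ℝ) < 2 * Real.pi := by positivity
  unfold ftilde
  have hfun : (fun x : ℝ => checkMinus φ x * Complex.exp (Complex.I * p * x))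
      = fun x : ℝ => (Complex.I * ((Real.sqrt (2 * Real.pi) : ℝ) : ℂ)⁻¹ * ((2 * Real.pi : ℝ) : ℂ))
          * (𝓕 (fun q => psi φ (-(2 * Real.pi) * q)) x * Complex.exp (Complex.I * p * x)) := by
    ext x
    rw [checkMinus_formula]
    ring
  rw [hfun, MeasureTheory.integral_const_mul,
    inv_int _ (comp_mul_smooth (psi_smooth hφ hc) _)
      (comp_mul_supp (psi_compactSupport hc) (by linarith : -(2*Real.pi) ≠ 0)),
    show -(2 * Real.pi) * (p / (2 * Real.pi)) = -p by
      rw [neg_mul, mul_comm (2*Real.pi), div_mul_cancel₀ _ h2π.ne'],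
    ← two_pi_sqrt_sq]
  have h1 : ((Real.sqrt (2*Real.pi):ℝ):ℂ)⁻¹ * ((Real.sqrt (2*Real.pi):ℝ):ℂ) = 1 :=
    inv_mul_cancel₀ two_pi_sqrt_ne
  calc ((Real.sqrt (2*Real.pi):ℝ):ℂ)⁻¹ * (Complex.I * ((Real.sqrt (2*Real.pi):ℝ):ℂ)⁻¹ *
        (((Real.sqrt (2*Real.pi):ℝ):ℂ) * ((Real.sqrt (2*Real.pi):ℝ):ℂ)) * psi φ (-p))
      = Complex.I * psi φ (-p) * ((((Real.sqrt (2*Real.pi):ℝ):ℂ)⁻¹ * ((Real.sqrt (2*Real.pi):ℝ):ℂ)) *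
          (((Real.sqrt (2*Real.pi):ℝ):ℂ)⁻¹ * ((Real.sqrt (2*Real.pi):ℝ):ℂ))) := by ring
    _ = Complex.I * psi φ (-p) := by rw [h1]; ring

end Main


/-- For `φ ∈ C_c^∞(ℝ)`, the functions `φ̌^±` are Schwartz, and
`(φ̌^±)^̂± = φ` while `(φ̌^±)^̂∓ = 0`. -/
theorem check_transform_inverts
    (φ : ℝ → ℂ) (hφ : ContDiff ℝ (⊤ : ℕ∞) φ) (hc : HasCompactSupport φ) :
    ((∃ g : SchwartzMap ℝ ℂ, ∀ ξ : ℝ, g ξ = checkPlus φ ξ) ∧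
     (∃ g : SchwartzMap ℝ ℂ, ∀ ξ : ℝ, g ξ = checkMinus φ ξ)) ∧
    (∀ β : ℝ, hatPlus (checkPlus φ) β = φ β) ∧
    (∀ β : ℝ, hatMinus (checkPlus φ) β = 0) ∧
    (∀ β : ℝ, hatMinus (checkMinus φ) β = φ β) ∧
    (∀ β : ℝ, hatPlus (checkMinus φ) β = 0) := by
  have h2π : (0:ℝ) < 2 * Real.pi := by positivity
  have hs2 := comp_mul_smooth (psi_smooth hφ hc) (2 * Real.pi)
  have hc2 := comp_mul_supp (psi_compactSupport hc) h2π.ne'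
  have hs3 := comp_mul_smooth (psi_smooth hφ hc) (-(2 * Real.pi))
  have hc3 := comp_mul_supp (psi_compactSupport hc) (by linarith : -(2*Real.pi) ≠ 0)
  refine ⟨⟨?_, ?_⟩, ?_, ?_, ?_, ?_⟩
  · refine ⟨(-(Complex.I * ((Real.sqrt (2 * Real.pi) : ℝ) : ℂ)⁻¹ * ((2 * Real.pi : ℝ) : ℂ)))
      • SchwartzMap.fourierTransformCLM ℂ (ccToSchwartz _ hs2 hc2), fun ξ => ?_⟩
    rw [checkPlus_formula]
    simp only [SchwartzMap.smul_apply, SchwartzMap.fourierTransformCLM_apply, smul_eq_mul]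
    rfl
  · refine ⟨(Complex.I * ((Real.sqrt (2 * Real.pi) : ℝ) : ℂ)⁻¹ * ((2 * Real.pi : ℝ) : ℂ))
      • SchwartzMap.fourierTransformCLM ℂ (ccToSchwartz _ hs3 hc3), fun ξ => ?_⟩
    rw [checkMinus_formula]
    simp only [SchwartzMap.smul_apply, SchwartzMap.fourierTransformCLM_apply, smul_eq_mul]
    rfl
  · intro β
    have hne : ((Real.exp β : ℝ) : ℂ) ≠ 0 := Complex.ofReal_ne_zero.mpr (Real.exp_pos β).ne'
    unfold hatPlus
    rw [ftilde_checkPlus hφ hc, psi_exp, div_eq_mul_inv]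
    calc Complex.I * ↑(Real.exp β) * (-Complex.I * (φ β * (↑(Real.exp β):ℂ)⁻¹))
        = (-(Complex.I*Complex.I)) * ((↑(Real.exp β):ℂ) * ((↑(Real.exp β):ℂ))⁻¹) * φ β := by ring
      _ = φ β := by rw [Complex.I_mul_I, mul_inv_cancel₀ hne]; ring
  · intro β
    unfold hatMinus
    rw [ftilde_checkPlus hφ hc, psi_nonpos (by linarith [Real.exp_pos β] : -Real.exp β ≤ 0)]
    ring
  · intro β
    have hne : ((Real.exp β : ℝ) : ℂ) ≠ 0 := Complex.ofReal_ne_zero.mpr (Real.exp_pos β).ne'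
    unfold hatMinus
    rw [ftilde_checkMinus hφ hc, neg_neg, psi_exp, div_eq_mul_inv]
    calc -(Complex.I * ↑(Real.exp β) * (Complex.I * (φ β * (↑(Real.exp β):ℂ)⁻¹)))
        = (-(Complex.I*Complex.I)) * ((↑(Real.exp β):ℂ) * ((↑(Real.exp β):ℂ))⁻¹) * φ β := by ring
      _ = φ β := by rw [Complex.I_mul_I, mul_inv_cancel₀ hne]; ring
  · intro β
    unfold hatPlus
    rw [ftilde_checkMinus hφ hc, psi_nonpos (by linarith [Real.exp_pos β] : -Real.exp β ≤ 0)]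
    ring
end
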